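/- arXiv:1904.11682 — 2 statements merged into one kernel-verified Lean document; each statement's English description precedes it below -/
import Mathlib

section
/- Let d be a natural number and let g : ℝ^d → ℝ^{d×d} be an ℝ-linear map. Suppose r, r' ∈ ℝ^d satisfy g(r)ᵀ = g(r) and g(r')ᵀ = -g(r'). Fix h, t ∈ ℝ^d with hᵀ g(r) t ≠ 0 and hᵀ g(r') t ≠ 0. Then for every pair of real numbers a, b there exist scalars w₁, w₂ ∈ ℝ such that, setting r'' = w₁ • r + w₂ • r', one has hᵀ g(r'') t = a and tᵀ g(r'') h = b. (This is the 'general asymmetric relations' case of Proposition 1: the scoring function can realize any prescribed pair of forward and backward scores.) -/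
/-!
On the plane spanned by `r` and `r'` the forward score `hᵀ g(·) t` and the backward score
`tᵀ g(·) h` are linear. Since `g r` is symmetric and `g r'` skew-symmetric, they send
`w₁ • r + w₂ • r'` to `w₁ s + w₂ k` and `w₁ s - w₂ k`, where `s = hᵀ g(r) t ≠ 0` and
`k = hᵀ g(r') t ≠ 0`: an invertible `2 × 2` system, so every pair of scores is attained.
-/

open Matrix

section Transpose

variable {n R : Type*} [Fintype n]

theorem Matrix.dotProduct_mulVec_swap_of_transpose_eq [CommSemiring R] {M : Matrix n n R}
    (hM : Mᵀ = M) (x y : n → R) : y ⬝ᵥ M *ᵥ x = x ⬝ᵥ M *ᵥ y := by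
  rw [← dotProduct_transpose_mulVec, hM]

theorem Matrix.dotProduct_mulVec_swap_of_transpose_eq_neg [CommRing R] {M : Matrix n n R}
    (hM : Mᵀ = -M) (x y : n → R) : y ⬝ᵥ M *ᵥ x = -(x ⬝ᵥ M *ᵥ y) := by
  rw [← dotProduct_transpose_mulVec, hM, neg_mulVec, dotProduct_neg]

end Transpose

theorem Matrix.dotProduct_mulVec_map_add_smul {n R V : Type*} [Fintype n] [CommSemiring R]
    [AddCommMonoid V] [Module R V] (g : V →ₗ[R] Matrix n n R) (r r' : V) (w₁ w₂ : R)
    (x y : n → R) :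
    x ⬝ᵥ g (w₁ • r + w₂ • r') *ᵥ y = w₁ * (x ⬝ᵥ g r *ᵥ y) + w₂ * (x ⬝ᵥ g r' *ᵥ y) := by
  simp only [map_add, map_smul, add_mulVec, smul_mulVec, dotProduct_add, dotProduct_smul,
    smul_eq_mul]

theorem exists_mul_add_mul_eq_and_mul_sub_mul_eq {K : Type*} [Field K] [CharZero K]
    {s k : K} (hs : s ≠ 0) (hk : k ≠ 0) (a b : K) :
    ∃ w₁ w₂ : K, w₁ * s + w₂ * k = a ∧ w₁ * s - w₂ * k = b :=
  ⟨(a + b) / (2 * s), (a - b) / (2 * k), by field_simp; ring, by field_simp; ring⟩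

theorem bilinear_general_asymmetric_relation (d : ℕ)
    (g : (Fin d → ℝ) →ₗ[ℝ] Matrix (Fin d) (Fin d) ℝ)
    (r r' : Fin d → ℝ)
    (hsym : (g r).transpose = g r)
    (hskew : (g r').transpose = -(g r'))
    (h t : Fin d → ℝ)
    (hr : h ⬝ᵥ (g r).mulVec t ≠ 0)
    (hr' : h ⬝ᵥ (g r').mulVec t ≠ 0)
    (a b : ℝ) :
    ∃ w₁ w₂ : ℝ,
      h ⬝ᵥ (g (w₁ • r + w₂ • r')).mulVec t = a ∧
      t ⬝ᵥ (g (w₁ • r + w₂ • r')).mulVec h = b := by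
  obtain ⟨w₁, w₂, hforward, hbackward⟩ := exists_mul_add_mul_eq_and_mul_sub_mul_eq hr hr' a b
  refine ⟨w₁, w₂, ?_, ?_⟩
  · rw [dotProduct_mulVec_map_add_smul, hforward]
  · rw [dotProduct_mulVec_map_add_smul, dotProduct_mulVec_swap_of_transpose_eq hsym,
      dotProduct_mulVec_swap_of_transpose_eq_neg hskew, mul_neg, ← sub_eq_add_neg, hbackward]
end

section
/- Let d be a natural number and h, t ∈ ℂ^d, and let r ∈ ℂ^d have all components real (i.e. the imaginary part of every r_k is 0). Then Re(∑_k t_k · r_k · conj(h_k)) = Re(∑_k h_k · r_k · conj(t_k)). (This shows the ComplEx scoring function models symmetric relations when the relation embedding is real.) -/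
theorem mul_mul_star_eq_star_of_isSelfAdjoint {R : Type*} [CommSemiring R] [StarRing R] {r : R}
    (hr : IsSelfAdjoint r) (h t : R) : t * r * star h = star (h * r * star t) := by
  rw [star_mul, star_mul, star_star, hr.star_eq, mul_assoc]

theorem complEx_real_relation_symmetric (d : ℕ) (h t : Fin d → ℂ) (r : Fin d → ℂ)
    (hr : ∀ k, (r k).im = 0) :
    (∑ k : Fin d, t k * r k * (starRingEnd ℂ) (h k)).re =
      (∑ k : Fin d, h k * r k * (starRingEnd ℂ) (t k)).re := by
  have hr_selfAdjoint : ∀ k, IsSelfAdjoint (r k) := fun k => Complex.conj_eq_iff_im.mpr (hr k)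
  have h_swap : ∑ k : Fin d, t k * r k * (starRingEnd ℂ) (h k) =
      (starRingEnd ℂ) (∑ k : Fin d, h k * r k * (starRingEnd ℂ) (t k)) := by
    rw [map_sum]
    exact Finset.sum_congr rfl fun k _ =>
      mul_mul_star_eq_star_of_isSelfAdjoint (hr_selfAdjoint k) (h k) (t k)
  rw [h_swap, Complex.conj_re]
end
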